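/- arXiv:2303.09934 — 2 statements merged into one kernel-verified Lean document; each statement's English description precedes it below -/
import Mathlib

section
/- Let (X,R,D) be a bimodal frame such that R is symmetric and ≠_X ⊆ D, where ≠_X is the inequality relation on X, and let M=(X,R,D,θ) be a model in which every substitution instance of the formula Con is true. Let Γ be a finite subformula-closed set of bimodal formulas, let Ψ⊇Γ be a finite set of bimodal formulas, and let M̂=(X/∼_Ψ, R̂, D̂, θ̂) be a definable Γ-filtration of M through ∼_Ψ. Then the frame (X/∼_Ψ, R̂) is connected. -/
/-- Bimodal formulas: variables, ⊥, →, ◇ (along R), ⟨≠⟩ (along D). -/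
inductive BForm : Type
  | var : ℕ → BForm
  | bot : BForm
  | imp : BForm → BForm → BForm
  | dia : BForm → BForm
  | ddia : BForm → BForm
  deriving DecidableEq

namespace BForm

def neg (φ : BForm) : BForm := imp φ bot
def top : BForm := neg bot
def or (φ ψ : BForm) : BForm := imp (neg φ) ψ
def and (φ ψ : BForm) : BForm := neg (imp φ (neg ψ))
def box (φ : BForm) : BForm := neg (dia (neg φ))
def dbox (φ : BForm) : BForm := neg (ddia (neg φ))
/-- ∃φ := ⟨≠⟩φ ∨ φ -/
def Ex (φ : BForm) : BForm := or (ddia φ) φ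
/-- ∀φ := [≠]φ ∧ φ -/
def All (φ : BForm) : BForm := and (dbox φ) φ

/-- Uniform substitution. -/
def subst (σ : ℕ → BForm) : BForm → BForm
  | var p => σ p
  | bot => bot
  | imp a b => imp (subst σ a) (subst σ b)
  | dia a => dia (subst σ a)
  | ddia a => ddia (subst σ a)

/-- The set of subformulas of a formula. -/
def sub : BForm → Finset BForm
  | var p => {var p}
  | bot => {bot}
  | imp a b => insert (imp a b) (sub a ∪ sub b)
  | dia a => insert (dia a) (sub a)
  | ddia a => insert (ddia a) (sub a)

def bigOr : List BForm → BForm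
  | [] => bot
  | φ :: l => or φ (bigOr l)

def bigAnd : List BForm → BForm
  | [] => top
  | φ :: l => and φ (bigAnd l)

/-- CF_k := ∀⋁_{i<k}(p_i ∧ ⋀_{j<k, j≠i}¬p_j) → ∃⋁_{i<k}(p_i ∧ ◇p_i). -/
def CF (k : ℕ) : BForm :=
  imp
    (All (bigOr ((List.range k).map fun i =>
      and (var i) (bigAnd (((List.range k).filter (fun j => j ≠ i)).map fun j => neg (var j))))))
    (Ex (bigOr ((List.range k).map fun i => and (var i) (dia (var i)))))

/-- Con := ∃p ∧ ∃¬p → ∃(p ∧ ◇¬p). -/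
def Con : BForm :=
  imp (and (Ex (var 0)) (Ex (neg (var 0)))) (Ex (and (var 0) (dia (neg (var 0)))))

/-- p → [≠]⟨≠⟩p -/
def axB1 : BForm := imp (var 0) (dbox (ddia (var 0)))
/-- ⟨≠⟩⟨≠⟩p → ∃p -/
def axB2 : BForm := imp (ddia (ddia (var 0))) (Ex (var 0))
/-- ◇p → ∃p -/
def axB3 : BForm := imp (dia (var 0)) (Ex (var 0))
/-- p → □◇p -/
def axSymm : BForm := imp (var 0) (box (dia (var 0)))

end BForm

/-- Truth of a bimodal formula at a point of a model (X, R, D, θ). -/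
def BSat {X : Type} (R D : X → X → Prop) (θ : ℕ → X → Prop) : X → BForm → Prop
  | x, .var p => θ p x
  | _, .bot => False
  | x, .imp a b => BSat R D θ x a → BSat R D θ x b
  | x, .dia a => ∃ y, R x y ∧ BSat R D θ y a
  | x, .ddia a => ∃ y, D x y ∧ BSat R D θ y a

/-- Validity of a bimodal formula in the frame (X, R, D). -/
def BValid {X : Type} (R D : X → X → Prop) (φ : BForm) : Prop :=
  ∀ (θ : ℕ → X → Prop) (x : X), BSat R D θ x φ

/-- φ is a classical tautology (a substitution instance of a propositional tautology):
it is true under every assignment of truth values that respects ⊥ and →. -/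
def IsTautology (φ : BForm) : Prop :=
  ∀ v : BForm → Prop, ¬ v .bot → (∀ a b, v (.imp a b) ↔ (v a → v b)) → v φ

/-- Normal bimodal logics. -/
structure IsNormalBL (L : Set BForm) : Prop where
  taut : ∀ φ, IsTautology φ → φ ∈ L
  negDiaBot : BForm.neg (.dia .bot) ∈ L
  negDdiaBot : BForm.neg (.ddia .bot) ∈ L
  diaOr : BForm.imp (.dia (.or (.var 0) (.var 1))) (.or (.dia (.var 0)) (.dia (.var 1))) ∈ L
  ddiaOr : BForm.imp (.ddia (.or (.var 0) (.var 1))) (.or (.ddia (.var 0)) (.ddia (.var 1))) ∈ L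
  mp : ∀ φ ψ, BForm.imp φ ψ ∈ L → φ ∈ L → ψ ∈ L
  subst : ∀ φ σ, φ ∈ L → BForm.subst σ φ ∈ L
  monoDia : ∀ φ ψ, BForm.imp φ ψ ∈ L → BForm.imp (.dia φ) (.dia ψ) ∈ L
  monoDdia : ∀ φ ψ, BForm.imp φ ψ ∈ L → BForm.imp (.ddia φ) (.ddia ψ) ∈ L

/-- The smallest normal bimodal logic containing a given set of axioms. -/
def NormalLogicOf (Ax : Set BForm) : Set BForm :=
  ⋂₀ {L : Set BForm | IsNormalBL L ∧ Ax ⊆ L}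

/-- Axioms of K_≠. -/
def KDiffAx : Set BForm := {BForm.axB1, BForm.axB2, BForm.axB3}
/-- Axioms of KB_≠. -/
def KBDiffAx : Set BForm := insert BForm.axSymm KDiffAx

/-- A proper partition of X w.r.t. R: a family of nonempty pairwise disjoint sets
with union X, none of which contains two R-related points. -/
def IsProperPartition {X : Type} (R : X → X → Prop) (A : Set (Set X)) : Prop :=
  (∀ a ∈ A, a.Nonempty) ∧
  (∀ a ∈ A, ∀ b ∈ A, a ≠ b → a ∩ b = ∅) ∧
  ⋃₀ A = Set.univ ∧
  ∀ a ∈ A, ∀ x ∈ a, ∀ y ∈ a, ¬ R x y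

/-- C(X,R) > k : there is no finite proper partition of X with at most k elements. -/
def ChromGT {X : Type} (R : X → X → Prop) (k : ℕ) : Prop :=
  ∀ A : Finset (Set X), A.card ≤ k → ¬ IsProperPartition R (↑A : Set (Set X))

/-- (X,R) is connected: any two points are linked by a finite path of R-edges
traversed in either direction. -/
def IsConnectedRel {X : Type} (R : X → X → Prop) : Prop :=
  ∀ x y : X, ∃ (n : ℕ) (f : ℕ → X), f 0 = x ∧ f n = y ∧
    ∀ i < n, R (f i) (f (i + 1)) ∨ R (f (i + 1)) (f i)

/-- Γ is closed under subformulas. -/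
def SubClosed (Γ : Finset BForm) : Prop := ∀ φ ∈ Γ, BForm.sub φ ⊆ Γ

section Aux
open Classical

variable {X : Type} (R D : X → X → Prop) (θ : ℕ → X → Prop)

lemma sat_neg (x : X) (φ : BForm) :
    BSat R D θ x (BForm.neg φ) ↔ ¬ BSat R D θ x φ := by
  simp [BForm.neg, BSat]

lemma sat_and (x : X) (φ ψ : BForm) :
    BSat R D θ x (BForm.and φ ψ) ↔ BSat R D θ x φ ∧ BSat R D θ x ψ := by
  simp only [BForm.and, BForm.neg, BSat]; tauto

lemma sat_or (x : X) (φ ψ : BForm) :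
    BSat R D θ x (BForm.or φ ψ) ↔ BSat R D θ x φ ∨ BSat R D θ x ψ := by
  simp only [BForm.or, BForm.neg, BSat]; tauto

lemma sat_bigAnd (x : X) (l : List BForm) :
    BSat R D θ x (BForm.bigAnd l) ↔ ∀ φ ∈ l, BSat R D θ x φ := by
  induction l with
  | nil => simp [BForm.bigAnd, BForm.top, BForm.neg, BSat]
  | cons a l ih => simp [BForm.bigAnd, sat_and, ih]

lemma sat_bigOr (x : X) (l : List BForm) :
    BSat R D θ x (BForm.bigOr l) ↔ ∃ φ ∈ l, BSat R D θ x φ := by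
  induction l with
  | nil => simp [BForm.bigOr, BSat]
  | cons a l ih => simp [BForm.bigOr, sat_or, ih]

lemma sat_Ex (x : X) (φ : BForm) :
    BSat R D θ x (BForm.Ex φ) ↔ (∃ y, D x y ∧ BSat R D θ y φ) ∨ BSat R D θ x φ := by
  rw [BForm.Ex, sat_or]
  rfl

lemma sat_Ex_of (hD : ∀ x y : X, x ≠ y → D x y) (x : X) (φ : BForm)
    (h : ∃ z, BSat R D θ z φ) : BSat R D θ x (BForm.Ex φ) := by
  obtain ⟨z, hz⟩ := h
  rw [sat_Ex]
  by_cases hzx : z = x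
  · exact Or.inr (hzx ▸ hz)
  · exact Or.inl ⟨z, hD x z (fun h => hzx h.symm), hz⟩

/-- Characteristic formula of the `∼Ψ`-class of `a`. -/
noncomputable def charf (Ψ : Finset BForm) (a : X) : BForm :=
  BForm.bigAnd (Ψ.toList.map fun ψ => if BSat R D θ a ψ then ψ else BForm.neg ψ)

lemma sat_charf (Ψ : Finset BForm) (a z : X) :
    BSat R D θ z (charf R D θ Ψ a) ↔ ∀ ψ ∈ Ψ, (BSat R D θ z ψ ↔ BSat R D θ a ψ) := by
  rw [charf, sat_bigAnd]
  simp only [List.forall_mem_map, Finset.mem_toList]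
  refine forall_congr' fun ψ => imp_congr_right fun _ => ?_
  split_ifs with h <;> simp [sat_neg, h]

end Aux

lemma reach_to_path {Q : Type} (R' : Q → Q → Prop) (x y : Q)
    (h : Relation.ReflTransGen (fun a b => R' a b ∨ R' b a) x y) :
    ∃ (n : ℕ) (f : ℕ → Q), f 0 = x ∧ f n = y ∧
      ∀ i < n, R' (f i) (f (i + 1)) ∨ R' (f (i + 1)) (f i) := by
  induction h with
  | refl => exact ⟨0, fun _ => x, rfl, rfl, by omega⟩
  | @tail b c _ hbc ih =>
    obtain ⟨n, f, h0, hn, hstep⟩ := ih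
    refine ⟨n + 1, fun i => if i ≤ n then f i else c, by simp [h0], by simp, ?_⟩
    intro i hi
    rcases Nat.lt_or_ge i n with hlt | hge
    · simpa [Nat.le_of_lt hlt, Nat.succ_le_of_lt hlt] using hstep i hlt
    · have hieq : i = n := by omega
      subst hieq
      simpa [hn] using hbc

/-- If R is symmetric, ≠_X ⊆ D, and every substitution instance of Con
is true in M = (X,R,D,θ), then for every definable Γ-filtration M̂ = (X/∼_Ψ, R̂, D̂, θ̂)
of M, the frame (X/∼_Ψ, R̂) is connected. -/
theorem stmt10 {X : Type} [Nonempty X] (R D : X → X → Prop) (θ : ℕ → X → Prop)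
    (hsymm : ∀ x y, R x y → R y x) (hD : ∀ x y : X, x ≠ y → D x y)
    (hCon : ∀ (σ : ℕ → BForm) (x : X), BSat R D θ x (BForm.subst σ BForm.Con))
    (Γ Ψ : Finset BForm) (hΓ : SubClosed Γ) (hΓΨ : Γ ⊆ Ψ)
    (Q : Type) (q : X → Q) (hsurj : Function.Surjective q)
    (hq : ∀ x y, q x = q y ↔ ∀ ψ ∈ Ψ, (BSat R D θ x ψ ↔ BSat R D θ y ψ))
    (R' D' : Q → Q → Prop) (θ' : ℕ → Q → Prop)
    (hval : ∀ p, BForm.var p ∈ Γ → ∀ x, θ' p (q x) ↔ θ p x)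
    (hRmin : ∀ x y, R x y → R' (q x) (q y))
    (hRmax : ∀ x y, R' (q x) (q y) →
      ∀ ψ, BForm.dia ψ ∈ Γ → BSat R D θ y ψ → BSat R D θ x (.dia ψ))
    (hDmin : ∀ x y, D x y → D' (q x) (q y))
    (hDmax : ∀ x y, D' (q x) (q y) →
      ∀ ψ, BForm.ddia ψ ∈ Γ → BSat R D θ y ψ → BSat R D θ x (.ddia ψ)) :
    IsConnectedRel R' := by
  classical
  intro a b
  apply reach_to_path
  by_contra hnb
  -- section of q
  obtain ⟨s, hs⟩ := hsurj.hasRightInverse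
  -- Q is finite
  haveI : Fintype Q := by
    apply Fintype.ofInjective (fun c : Q => fun ψ : {ψ // ψ ∈ Ψ} => BSat R D θ (s c) ψ.1)
    intro c c' hcc'
    have : q (s c) = q (s c') := by
      rw [hq]
      intro ψ hψ
      have := congrFun hcc' ⟨ψ, hψ⟩
      simp only at this
      rw [this]
    rwa [hs c, hs c'] at this
  set step := fun u v : Q => R' u v ∨ R' v u with hstepdef
  set C : Set Q := {c | Relation.ReflTransGen step a c} with hCdef
  -- characteristic formula of q⁻¹(C)
  set L : List X := (Finset.univ.filter (fun c : Q => c ∈ C)).toList.map s with hLdef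
  set χ : BForm := BForm.bigOr (L.map (charf R D θ Ψ)) with hχdef
  have hχsat : ∀ z : X, BSat R D θ z χ ↔ q z ∈ C := by
    intro z
    rw [hχdef, sat_bigOr]
    constructor
    · rintro ⟨φ, hφ, hsatφ⟩
      simp only [hLdef, List.mem_map, Finset.mem_toList, Finset.mem_filter,
        Finset.mem_univ, true_and] at hφ
      obtain ⟨x', ⟨c, hc, rfl⟩, rfl⟩ := hφ
      rw [sat_charf] at hsatφ
      have : q z = q (s c) := (hq z (s c)).mpr hsatφ
      rw [this, hs c]; exact hc
    · intro hz
      refine ⟨charf R D θ Ψ (s (q z)), ?_, ?_⟩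
      · simp only [List.mem_map, hLdef, Finset.mem_toList, Finset.mem_filter,
          Finset.mem_univ, true_and]
        exact ⟨s (q z), ⟨q z, hz, rfl⟩, rfl⟩
      · rw [sat_charf]
        have : q z = q (s (q z)) := (hs (q z)).symm ▸ rfl
        exact (hq z (s (q z))).mp this
  -- instance of Con with p ↦ χ
  obtain ⟨w⟩ := ‹Nonempty X›
  have hconw := hCon (fun _ => χ) w
  have hsubst : BForm.subst (fun _ => χ) BForm.Con =
      BForm.imp (BForm.and (BForm.Ex χ) (BForm.Ex (BForm.neg χ)))
        (BForm.Ex (BForm.and χ (BForm.dia (BForm.neg χ)))) := rfl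
  rw [hsubst] at hconw
  have hprem : BSat R D θ w (BForm.and (BForm.Ex χ) (BForm.Ex (BForm.neg χ))) := by
    rw [sat_and]
    constructor
    · apply sat_Ex_of R D θ hD
      refine ⟨s a, ?_⟩
      rw [hχsat, hs a]
      exact Relation.ReflTransGen.refl
    · apply sat_Ex_of R D θ hD
      refine ⟨s b, ?_⟩
      rw [sat_neg, hχsat, hs b]
      exact hnb
  have hconc := hconw hprem
  rw [sat_Ex] at hconc
  have : ∃ u, BSat R D θ u (BForm.and χ (BForm.dia (BForm.neg χ))) := by
    rcases hconc with ⟨u, _, hu⟩ | hu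
    · exact ⟨u, hu⟩
    · exact ⟨w, hu⟩
  obtain ⟨u, hu⟩ := this
  rw [sat_and] at hu
  obtain ⟨hu1, hu2⟩ := hu
  obtain ⟨v, hRuv, hv⟩ := hu2
  rw [sat_neg, hχsat] at hv
  rw [hχsat] at hu1
  apply hv
  exact Relation.ReflTransGen.tail hu1 (Or.inl (hRmin u v hRuv))
end

section
/- Let F=(X,R,D) be a bimodal frame with ≠_X ⊆ D, where ≠_X is the inequality relation on X, and let F♭=(Y,S,≠_Y) be its repairing. Then the map f:Y→X defined by f(x,i)=x is a surjective p-morphism from F♭ onto F; that is: f is onto; (x,i) S (y,j) implies f(x,i) R f(y,j); whenever f(a) R z there is b∈Y with a S b and f(b)=z; a ≠ b implies f(a) D f(b); and whenever f(a) D z there is b∈Y with b ≠ a and f(b)=z. -/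
/-- The carrier of the repairing of a frame (X,R,D):
Y = {(x,0) : x ∈ X} ∪ {(x,1) : x ∈ X and x D x}. -/
def RepairY (X : Type) (D : X → X → Prop) : Type :=
  {p : X × ℕ // p.2 = 0 ∨ (p.2 = 1 ∧ D p.1 p.1)}

/-- The relation of the repairing: (x,i) S (y,j) iff x R y. -/
def RepairS {X : Type} (R : X → X → Prop) (D : X → X → Prop)
    (a b : RepairY X D) : Prop :=
  R a.1.1 b.1.1

/-- If ≠_X ⊆ D, the map f(x,i) = x is a surjective p-morphism from the
repairing (Y,S,≠_Y) of (X,R,D) onto (X,R,D). -/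
theorem stmt15 {X : Type} [Nonempty X] (R D : X → X → Prop)
    (hD : ∀ x y : X, x ≠ y → D x y)
    (f : RepairY X D → X) (hf : ∀ a, f a = a.1.1) :
    Function.Surjective f ∧
    (∀ a b, RepairS R D a b → R (f a) (f b)) ∧
    (∀ (a : RepairY X D) (z : X), R (f a) z → ∃ b, RepairS R D a b ∧ f b = z) ∧
    (∀ a b : RepairY X D, a ≠ b → D (f a) (f b)) ∧
    (∀ (a : RepairY X D) (z : X), D (f a) z → ∃ b, b ≠ a ∧ f b = z) := by
  constructor
  · intro x; exact ⟨⟨(x,0), Or.inl rfl⟩, hf _⟩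
  refine ⟨fun a b h => by rwa [hf, hf], ?_, ?_, ?_⟩
  · intro a z hz
    exact ⟨⟨(z,0), Or.inl rfl⟩, by simpa [RepairS, hf] using hz, hf _⟩
  · intro a b hab
    rw [hf, hf]
    by_cases h : a.1.1 = b.1.1
    · -- indices differ, so one index is 1, giving D x x
      have hidx : a.1.2 ≠ b.1.2 := by
        intro h2; apply hab; apply Subtype.ext; exact Prod.ext h h2
      rcases a.2 with ha | ⟨ha, hda⟩
      · rcases b.2 with hb | ⟨hb, hdb⟩
        · exact absurd (ha.trans hb.symm) hidx
        · rw [h]; exact hdb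
      · rw [← h]; exact hda
    · exact hD _ _ h
  · intro a z hz
    rw [hf] at hz
    by_cases h : z = a.1.1
    · rw [h] at hz ⊢; clear h
      rcases a.2 with ha | ⟨ha, _⟩
      · refine ⟨⟨(a.1.1,1), Or.inr ⟨rfl, hz⟩⟩, ?_, hf _⟩
        intro he; have := congrArg (fun b => b.1.2) he; simp [ha] at this
      · refine ⟨⟨(a.1.1,0), Or.inl rfl⟩, ?_, hf _⟩
        intro he; have := congrArg (fun b => b.1.2) he; simp [ha] at this
    · refine ⟨⟨(z,0), Or.inl rfl⟩, ?_, hf _⟩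
      intro he; have := congrArg (fun b => b.1.1) he; exact h this
end
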